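/- arXiv:2511.18671 — 3 statements merged into one kernel-verified Lean document; each statement's English description precedes it below -/
import Mathlib

section
/- Let S and A be finite nonempty types, r : S × A → ℝ a reward function, P : S × A → PMF S a transition function, and γ ∈ [0,1) a discount factor. For a policy π : S → PMF A, define finite-horizon value functions recursively by V₀^π(s) = 0, Q_{n+1}^π(s,a) = r(s,a) + γ · ∑_{s'} P(s,a)(s') · V_n^π(s'), and V_{n+1}^π(s) = ∑_a π(s)(a) · Q_{n+1}^π(s,a). Suppose a policy π' satisfies the improvement condition ∑_a π'(s)(a) · Q_n^π(s,a) ≥ V_n^π(s) for every state s and every horizon n ≤ N. Then V_N^{π'}(s) ≥ V_N^π(s) for every state s. -/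
open Finset

/-- Finite-horizon state-value function: `V 0 = 0` and
`V (n+1) s = ∑ a, π s a * (r (s,a) + γ * ∑ s', P (s,a) s' * V n s')`. -/
noncomputable def Vfun {S A : Type*} [Fintype S] [Fintype A]
    (r : S × A → ℝ) (P : S × A → PMF S) (γ : ℝ) (π : S → PMF A) :
    ℕ → S → ℝ
  | 0 => fun _ => 0
  | n + 1 => fun s =>
      ∑ a, (π s a).toReal *
        (r (s, a) + γ * ∑ s', (P (s, a) s').toReal * Vfun r P γ π n s')

/-- Finite-horizon action-value function: `Q 0 = 0` and
`Q (n+1) (s,a) = r (s,a) + γ * ∑ s', P (s,a) s' * V n s'`. -/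
noncomputable def Qfun {S A : Type*} [Fintype S] [Fintype A]
    (r : S × A → ℝ) (P : S × A → PMF S) (γ : ℝ) (π : S → PMF A) :
    ℕ → S → A → ℝ
  | 0 => fun _ _ => 0
  | n + 1 => fun s a =>
      r (s, a) + γ * ∑ s', (P (s, a) s').toReal * Vfun r P γ π n s'

/-
Unrolling one Bellman step: `V_{n+1}^{π'}(s)` is the `π'(s)`-average of `Q_{n+1}^{π'}(s, ·)`,
and `Q_{n+1}` is monotone in `V_n` because `γ ≥ 0` and transition probabilities are nonnegative.
So if `V_n^{π'} ≥ V_n^π` everywhere, then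
`V_{n+1}^{π'}(s) ≥ E_{π'(s)}[Q_{n+1}^π(s, ·)] ≥ V_{n+1}^π(s)` by the improvement condition,
and induction on the horizon gives the claim.
-/

section
variable {S A : Type*} [Fintype S] [Fintype A]
  (r : S × A → ℝ) (P : S × A → PMF S)

theorem Vfun_succ_eq_sum_mul_Qfun (γ : ℝ) (π : S → PMF A) (n : ℕ) (s : S) :
    Vfun r P γ π (n + 1) s = ∑ a, (π s a).toReal * Qfun r P γ π (n + 1) s a :=
  rfl

theorem Qfun_succ_le_Qfun_succ {γ : ℝ} (hγ : 0 ≤ γ) {π π' : S → PMF A} {n : ℕ}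
    (hV : ∀ s, Vfun r P γ π n s ≤ Vfun r P γ π' n s) (s : S) (a : A) :
    Qfun r P γ π (n + 1) s a ≤ Qfun r P γ π' (n + 1) s a := by
  simp only [Qfun]
  gcongr with s'
  exact hV s'

end

theorem finite_horizon_policy_improvement_general {S A : Type*}
    [Fintype S] [Fintype A]
    (r : S × A → ℝ) (P : S × A → PMF S) (γ : ℝ)
    (hγ0 : 0 ≤ γ)
    (π π' : S → PMF A) (N : ℕ)
    (himp : ∀ s, ∀ n ≤ N,
      ∑ a, (π' s a).toReal * Qfun r P γ π n s a ≥ Vfun r P γ π n s) :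
    ∀ s, Vfun r P γ π' N s ≥ Vfun r P γ π N s := by
  suffices h : ∀ n ≤ N, ∀ s, Vfun r P γ π n s ≤ Vfun r P γ π' n s from h N le_rfl
  intro n hn
  induction n with
  | zero => simp [Vfun]
  | succ n ih =>
    intro s
    have hQ := Qfun_succ_le_Qfun_succ r P hγ0 (ih (Nat.le_of_succ_le hn)) s
    calc Vfun r P γ π (n + 1) s
        ≤ ∑ a, (π' s a).toReal * Qfun r P γ π (n + 1) s a := himp s (n + 1) hn
      _ ≤ ∑ a, (π' s a).toReal * Qfun r P γ π' (n + 1) s a := by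
          gcongr with a
          exact hQ a
      _ = Vfun r P γ π' (n + 1) s := (Vfun_succ_eq_sum_mul_Qfun r P γ π' n s).symm

/-- Finite-horizon policy improvement: if at every state and every horizon
`n ≤ N` the policy `π'` satisfies `∑ a, π' s a * Q_n^π s a ≥ V_n^π s`,
then `V_N^{π'} s ≥ V_N^π s` at every state. -/
theorem finite_horizon_policy_improvement {S A : Type*}
    [Fintype S] [Fintype A] [Nonempty S] [Nonempty A]
    (r : S × A → ℝ) (P : S × A → PMF S) (γ : ℝ)
    (hγ0 : 0 ≤ γ) (hγ1 : γ < 1)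
    (π π' : S → PMF A) (N : ℕ)
    (himp : ∀ s, ∀ n ≤ N,
      ∑ a, (π' s a).toReal * Qfun r P γ π n s a ≥ Vfun r P γ π n s) :
    ∀ s, Vfun r P γ π' N s ≥ Vfun r P γ π N s :=
  finite_horizon_policy_improvement_general r P γ hγ0 π π' N himp
end

section
/- Let S and A be finite nonempty types, r : S × A → ℝ, P : S × A → PMF S, and γ ∈ [0,1). Let π_g : S → PMF A be a policy and let Q_g : S × A → ℝ satisfy the Bellman equation for π_g: Q_g(s,a) = r(s,a) + γ · ∑_{s'} P(s,a)(s') · ∑_{a'} π_g(s')(a') · Q_g(s',a') for all s, a. Let t : S → ℝ be a threshold function such that for every state s, c(s) := ∑_{a : Q_g(s,a) ≥ t(s)} π_g(s)(a) > 0, and define the percentile-greedy policy π_ρ by π_ρ(s)(a) = π_g(s)(a)/c(s) if Q_g(s,a) ≥ t(s) and 0 otherwise. Let Q_ρ : S × A → ℝ satisfy the Bellman equation for π_ρ: Q_ρ(s,a) = r(s,a) + γ · ∑_{s'} P(s,a)(s') · ∑_{a'} π_ρ(s')(a') · Q_ρ(s',a') for all s, a. Then for every state s, ∑_a π_ρ(s)(a)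 · Q_ρ(s,a) ≥ ∑_a π_g(s)(a) · Q_g(s,a). -/
/-!
Conditioning a distribution on the event `{a | t ≤ q a}` can only raise the mean of `q`: it moves
mass from values below `t` onto values at least `t`. So `πρ` improves on `πg` by one step against
`Qg`, and the classical policy improvement argument propagates this: the gap `Δ s` between the state
values of `πρ` and `πg` satisfies `Δ ≥ γ · min Δ` pointwise, which forces `min Δ ≥ 0` as `γ < 1`.
-/

open Finset

section

variable {ι S A : Type*} [Fintype ι] [Fintype S] [Fintype A]

theorem PMF.toReal_mem_stdSimplex (p : PMF ι) : (fun i => (p i).toReal) ∈ stdSimplex ℝ ι := by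
  refine ⟨fun _ => ENNReal.toReal_nonneg, ?_⟩
  rw [← ENNReal.toReal_sum fun i _ => p.apply_ne_top i, ← ENNReal.toReal_one, ← p.tsum_coe,
    tsum_fintype]

theorem le_sum_mul_of_mem_stdSimplex {w f : ι → ℝ} (hw : w ∈ stdSimplex ℝ ι) {m : ℝ}
    (hm : ∀ i, m ≤ f i) : m ≤ ∑ i, w i * f i :=
  calc m = ∑ i, w i * m := by rw [← sum_mul, hw.2, one_mul]
    _ ≤ ∑ i, w i * f i := sum_le_sum fun i _ => mul_le_mul_of_nonneg_left (hm i) (hw.1 i)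

noncomputable def condAbove (w q : ι → ℝ) (t : ℝ) (i : ι) : ℝ :=
  if t ≤ q i then w i / ∑ j with t ≤ q j, w j else 0

section condAbove

variable {w : ι → ℝ} (q : ι → ℝ) (t : ℝ)

theorem condAbove_mem_stdSimplex (hw : ∀ i, 0 ≤ w i) (hc : 0 < ∑ i with t ≤ q i, w i) :
    condAbove w q t ∈ stdSimplex ℝ ι := by
  refine ⟨fun i => ?_, ?_⟩
  · unfold condAbove
    split_ifs
    exacts [div_nonneg (hw i) hc.le, le_rfl]
  · simp only [condAbove, ← sum_filter, ← sum_div, div_self hc.ne']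

theorem sum_condAbove_mul :
    ∑ i, condAbove w q t i * q i = (∑ i with t ≤ q i, w i * q i) / ∑ i with t ≤ q i, w i := by
  rw [sum_div, sum_filter]
  refine sum_congr rfl fun i _ => ?_
  unfold condAbove
  split_ifs
  exacts [div_mul_eq_mul_div _ _ _, zero_mul _]

theorem sum_mul_le_sum_condAbove_mul (hw : w ∈ stdSimplex ℝ ι)
    (hc : 0 < ∑ i with t ≤ q i, w i) :
    ∑ i, w i * q i ≤ ∑ i, condAbove w q t i * q i := by
  set c := ∑ i with t ≤ q i, w i
  set H := ∑ i with t ≤ q i, w i * q i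
  have hc_le_one : c ≤ 1 :=
    hw.2 ▸ sum_le_sum_of_subset_of_nonneg (filter_subset _ _) fun i _ _ => hw.1 i
  have h_center : ∑ i, w i * q i - t = ∑ i, w i * (q i - t) := by
    simp only [mul_sub, sum_sub_distrib, ← sum_mul, hw.2, one_mul]
  -- the entries below the threshold contribute only nonpositive terms
  have h_drop : ∑ i, w i * (q i - t) ≤ ∑ i with t ≤ q i, w i * (q i - t) := by
    rw [sum_filter]
    refine sum_le_sum fun i _ => ?_
    split_ifs with h
    · exact le_rfl
    · exact mul_nonpos_of_nonneg_of_nonpos (hw.1 i) (by linarith [not_le.mp h])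
  have h_above : ∑ i with t ≤ q i, w i * (q i - t) = H - c * t := by
    simp only [c, H, mul_sub, sum_sub_distrib, sum_mul]
  have h_above_nonneg : 0 ≤ H - c * t :=
    h_above ▸ sum_nonneg fun i hi =>
      mul_nonneg (hw.1 i) (sub_nonneg.mpr (mem_filter.mp hi).2)
  have h_rescale : H - c * t ≤ H / c - t := by
    calc H - c * t ≤ (H - c * t) / c := le_div_self h_above_nonneg hc hc_le_one
      _ = H / c - t := by field_simp
  rw [sum_condAbove_mul]
  linarith

end condAbove

def IsActionValue (r : S × A → ℝ) (P : S × A → S → ℝ) (γ : ℝ) (π Q : S → A → ℝ) : Prop :=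
  ∀ s a, Q s a = r (s, a) + γ * ∑ s', P (s, a) s' * ∑ a', π s' a' * Q s' a'

theorem nonneg_of_mul_lowerBound_le {γ : ℝ} (hγ : γ < 1) {Δ : S → ℝ}
    (h : ∀ m, (∀ s, m ≤ Δ s) → ∀ s, γ * m ≤ Δ s) (s : S) : 0 ≤ Δ s := by
  obtain ⟨s₀, -, hs₀⟩ := exists_min_image univ Δ ⟨s, mem_univ s⟩
  have hmin : ∀ s', Δ s₀ ≤ Δ s' := fun s' => hs₀ s' (mem_univ s')
  have hmin_nonneg : 0 ≤ Δ s₀ :=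
    nonneg_of_mul_nonneg_right (by linarith [h _ hmin s₀]) (sub_pos.mpr hγ)
  exact hmin_nonneg.trans (hmin s)

namespace IsActionValue

variable {r : S × A → ℝ} {P : S × A → S → ℝ} {γ : ℝ} {π π' Q Q' : S → A → ℝ}

theorem sub_eq (hQ : IsActionValue r P γ π Q) (hQ' : IsActionValue r P γ π' Q') (s : S) (a : A) :
    Q' s a - Q s a =
      γ * ∑ s', P (s, a) s' * (∑ a', π' s' a' * Q' s' a' - ∑ a', π s' a' * Q s' a') := by
  rw [hQ s a, hQ' s a]
  simp only [mul_sub, sum_sub_distrib]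
  ring

theorem value_le_of_improvement (hγ0 : 0 ≤ γ) (hγ1 : γ < 1) (hP : ∀ sa, P sa ∈ stdSimplex ℝ S)
    (hπ' : ∀ s, π' s ∈ stdSimplex ℝ A) (hQ : IsActionValue r P γ π Q)
    (hQ' : IsActionValue r P γ π' Q')
    (himp : ∀ s, ∑ a, π s a * Q s a ≤ ∑ a, π' s a * Q s a) (s : S) :
    ∑ a, π s a * Q s a ≤ ∑ a, π' s a * Q' s a := by
  suffices 0 ≤ ∑ a, π' s a * Q' s a - ∑ a, π s a * Q s a by linarith
  refine nonneg_of_mul_lowerBound_le hγ1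
    (Δ := fun s => ∑ a, π' s a * Q' s a - ∑ a, π s a * Q s a) (fun m hm s => ?_) s
  have hQ_gap : ∀ a, γ * m ≤ Q' s a - Q s a := fun a => by
    rw [hQ.sub_eq hQ']
    exact mul_le_mul_of_nonneg_left (le_sum_mul_of_mem_stdSimplex (hP _) hm) hγ0
  calc γ * m ≤ ∑ a, π' s a * (Q' s a - Q s a) := le_sum_mul_of_mem_stdSimplex (hπ' s) hQ_gap
    _ = ∑ a, π' s a * Q' s a - ∑ a, π' s a * Q s a := by simp only [mul_sub, sum_sub_distrib]
    _ ≤ ∑ a, π' s a * Q' s a - ∑ a, π s a * Q s a := by linarith [himp s]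

end IsActionValue

end

theorem percentile_greedy_improvement_discrete_general {S A : Type*}
    [Fintype S] [Fintype A]
    (r : S × A → ℝ) (P : S × A → PMF S) (γ : ℝ)
    (hγ0 : 0 ≤ γ) (hγ1 : γ < 1)
    (πg : S → PMF A) (Qg : S → A → ℝ)
    (hQg : ∀ s a, Qg s a =
      r (s, a) + γ * ∑ s', (P (s, a) s').toReal *
        ∑ a', (πg s' a').toReal * Qg s' a')
    (t : S → ℝ) (c : S → ℝ)
    (hc : ∀ s, c s =
      ∑ a ∈ Finset.univ.filter (fun a => t s ≤ Qg s a), (πg s a).toReal)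
    (hc_pos : ∀ s, 0 < c s)
    (πρ : S → A → ℝ)
    (hπρ : ∀ s a, πρ s a = if t s ≤ Qg s a then (πg s a).toReal / c s else 0)
    (Qρ : S → A → ℝ)
    (hQρ : ∀ s a, Qρ s a =
      r (s, a) + γ * ∑ s', (P (s, a) s').toReal *
        ∑ a', πρ s' a' * Qρ s' a') :
    ∀ s, ∑ a, πρ s a * Qρ s a ≥ ∑ a, (πg s a).toReal * Qg s a := by
  have hπρ_eq : πρ = fun s => condAbove (fun a => (πg s a).toReal) (Qg s) (t s) := by
    funext s a
    rw [hπρ, hc]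
    rfl
  have hmass_pos : ∀ s, 0 < ∑ a with t s ≤ Qg s a, (πg s a).toReal := fun s => hc s ▸ hc_pos s
  subst hπρ_eq
  exact IsActionValue.value_le_of_improvement hγ0 hγ1
    (fun sa => (P sa).toReal_mem_stdSimplex)
    (fun s => condAbove_mem_stdSimplex _ _ (fun _ => ENNReal.toReal_nonneg) (hmass_pos s)) hQg hQρ
    (fun s => sum_mul_le_sum_condAbove_mul _ _ (πg s).toReal_mem_stdSimplex (hmass_pos s))

/-- Discrete-action case of Theorem 5.1: the percentile-greedy policy `πρ`,
obtained by conditioning the baseline policy `πg` on actions whose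
action-value `Qg` lies above the threshold `t s`, is at least as good as
`πg` at every state. -/
theorem percentile_greedy_improvement_discrete {S A : Type*}
    [Fintype S] [Fintype A] [Nonempty S] [Nonempty A]
    (r : S × A → ℝ) (P : S × A → PMF S) (γ : ℝ)
    (hγ0 : 0 ≤ γ) (hγ1 : γ < 1)
    (πg : S → PMF A) (Qg : S → A → ℝ)
    (hQg : ∀ s a, Qg s a =
      r (s, a) + γ * ∑ s', (P (s, a) s').toReal *
        ∑ a', (πg s' a').toReal * Qg s' a')
    (t : S → ℝ) (c : S → ℝ)
    (hc : ∀ s, c s =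
      ∑ a ∈ Finset.univ.filter (fun a => t s ≤ Qg s a), (πg s a).toReal)
    (hc_pos : ∀ s, 0 < c s)
    (πρ : S → A → ℝ)
    (hπρ : ∀ s a, πρ s a = if t s ≤ Qg s a then (πg s a).toReal / c s else 0)
    (Qρ : S → A → ℝ)
    (hQρ : ∀ s a, Qρ s a =
      r (s, a) + γ * ∑ s', (P (s, a) s').toReal *
        ∑ a', πρ s' a' * Qρ s' a') :
    ∀ s, ∑ a, πρ s a * Qρ s a ≥ ∑ a, (πg s a).toReal * Qg s a :=
  percentile_greedy_improvement_discrete_general r P γ hγ0 hγ1 πg Qg hQg t c hc hc_pos πρ hπρ Qρ hQρ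
end

section
/- Let S be a finite nonempty type and (A, 𝒜) a measurable space. Let r : S × A → ℝ be bounded measurable, P : S × A → PMF S with s' ↦ P(s,a)(s') jointly measurable in a, and γ ∈ [0,1). Let π_g : S → Measure A assign a probability measure to each state, and let Q_g : S × A → ℝ be bounded measurable satisfying the Bellman equation Q_g(s,a) = r(s,a) + γ · ∑_{s'} P(s,a)(s') · ∫ Q_g(s',a') dπ_g(s')(a') for all s, a. Let t : S → ℝ be such that for every state s, π_g(s)({a : Q_g(s,a) ≥ t(s)}) > 0, and define π_ρ(s) to be the conditional measure of π_g(s) on the set {a : Q_g(s,a) ≥ t(s)}. Let Q_ρ : S × A → ℝ be bounded measurable satisfying the Bellman equation for π_ρ: Q_ρ(s,a) = r(s,a) + γ · ∑_{s'} P(s,a)(s') · ∫ Q_ρ(s',a') dπ_ρ(s')(a') for all s, a. Then for every state s, ∫ Q_ρ(s,a) dπ_ρ(s)(a) ≥ ∫ Q_g(s,a) dπ_g(s)(a). -/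
/-!
Let `W s` be the gain `∫ Qρ s ∂πρ s - ∫ Qg s ∂πg s` and `s₀` a state where it is smallest.
Subtracting the two Bellman equations, `Qρ s₀ a - Qg s₀ a = γ · 𝔼_{s' ∼ P(s₀,a)} W s' ≥ γ W s₀`
for every action `a`. Integrating against `πρ s₀` and using that conditioning `πg s₀` on a
superlevel set of `Qg s₀` can only raise the mean of `Qg s₀` gives `W s₀ ≥ γ W s₀`,
so `W s₀ ≥ 0` because `γ < 1`.
-/

open MeasureTheory

lemma PMF.sum_toReal_eq_one {S : Type*} [Fintype S] (p : PMF S) : ∑ s, (p s).toReal = 1 := by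
  rw [← ENNReal.toReal_sum fun s _ => p.apply_ne_top s,
    ← tsum_fintype (L := SummationFilter.unconditional S), p.tsum_coe, ENNReal.toReal_one]

lemma PMF.le_sum_toReal_mul {S : Type*} [Fintype S] (p : PMF S) {W : S → ℝ} {m : ℝ}
    (hm : ∀ s, m ≤ W s) : m ≤ ∑ s, (p s).toReal * W s :=
  calc m = ∑ s, (p s).toReal * m := by rw [← Finset.sum_mul, p.sum_toReal_eq_one, one_mul]
    _ ≤ ∑ s, (p s).toReal * W s := by gcongr with s; exact hm s

lemma nonneg_of_mul_le_self_at_min {S : Type*} [Finite S] {W : S → ℝ} {γ : ℝ} (hγ : γ < 1)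
    (hmin : ∀ s, (∀ s', W s ≤ W s') → γ * W s ≤ W s) (s : S) : 0 ≤ W s := by
  have : Nonempty S := ⟨s⟩
  obtain ⟨s₀, hs₀⟩ := Finite.exists_min W
  have hW₀ : 0 ≤ (1 - γ) * W s₀ := by linarith [hmin s₀ hs₀]
  exact (nonneg_of_mul_nonneg_right hW₀ (sub_pos.mpr hγ)).trans (hs₀ s)

lemma integral_le_integral_cond_superlevel {A : Type*} [MeasurableSpace A] (μ : Measure A)
    [IsProbabilityMeasure μ] {f : A → ℝ} (hf : Measurable f) (hfi : Integrable f μ) (c : ℝ)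
    (hpos : 0 < μ {a | c ≤ f a}) :
    ∫ a, f a ∂μ ≤ ∫ a, f a ∂(ProbabilityTheory.cond μ {a | c ≤ f a}) := by
  set B := {a | c ≤ f a}
  have hB : MeasurableSet B := measurableSet_le measurable_const hf
  set p := μ.real B
  have hp : 0 < p := ENNReal.toReal_pos hpos.ne' (measure_ne_top μ B)
  have hp1 : p ≤ 1 := measureReal_le_one
  have hcond : ∫ a, f a ∂(ProbabilityTheory.cond μ B) = p⁻¹ * ∫ a in B, f a ∂μ := by
    rw [ProbabilityTheory.cond, integral_smul_measure, ENNReal.toReal_inv]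
    rfl
  have hfB : c * p ≤ ∫ a in B, f a ∂μ :=
    setIntegral_ge_of_const_le_real hB (measure_ne_top μ B) (fun _ ha => ha) hfi.integrableOn
  have hfBc : ∫ a in Bᶜ, f a ∂μ ≤ c * (1 - p) :=
    calc ∫ a in Bᶜ, f a ∂μ ≤ ∫ _ in Bᶜ, c ∂μ :=
          setIntegral_mono_on hfi.integrableOn (integrableOn_const (measure_ne_top μ _))
            hB.compl fun a (ha : ¬c ≤ f a) => (not_le.mp ha).le
      _ = c * (1 - p) := by rw [setIntegral_const, probReal_compl_eq_one_sub hB, smul_eq_mul,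
          mul_comm]
  rw [hcond, ← integral_add_compl hB hfi, inv_mul_eq_div, le_div_iff₀ hp]
  nlinarith [mul_nonneg (sub_nonneg.mpr hp1) (sub_nonneg.mpr hfB)]

theorem percentile_greedy_improvement_continuous_general {S A : Type*}
    [Fintype S] [MeasurableSpace A]
    (r : S × A → ℝ)
    (P : S × A → PMF S)
    (γ : ℝ) (hγ0 : 0 ≤ γ) (hγ1 : γ < 1)
    (πg : S → Measure A) (hπg : ∀ s, IsProbabilityMeasure (πg s))
    (Qg : S → A → ℝ)
    (hQg_meas : ∀ s, Measurable (Qg s))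
    (hQg_bdd : ∃ C, ∀ s a, |Qg s a| ≤ C)
    (hQg : ∀ s a, Qg s a =
      r (s, a) + γ * ∑ s', (P (s, a) s').toReal * ∫ a', Qg s' a' ∂(πg s'))
    (t : S → ℝ)
    (ht_pos : ∀ s, 0 < πg s {a | t s ≤ Qg s a})
    (πρ : S → Measure A)
    (hπρ : ∀ s, πρ s = ProbabilityTheory.cond (πg s) {a | t s ≤ Qg s a})
    (Qρ : S → A → ℝ)
    (hQρ_meas : ∀ s, Measurable (Qρ s))
    (hQρ_bdd : ∃ C, ∀ s a, |Qρ s a| ≤ C)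
    (hQρ : ∀ s a, Qρ s a =
      r (s, a) + γ * ∑ s', (P (s, a) s').toReal * ∫ a', Qρ s' a' ∂(πρ s')) :
    ∀ s, (∫ a, Qρ s a ∂(πρ s)) ≥ ∫ a, Qg s a ∂(πg s) := by
  obtain ⟨Cg, hCg⟩ := hQg_bdd
  obtain ⟨Cρ, hCρ⟩ := hQρ_bdd
  have hQg_int : ∀ s (μ : Measure A) [IsFiniteMeasure μ], Integrable (Qg s) μ := fun s _ _ =>
    .of_bound (hQg_meas s).aestronglyMeasurable Cg (.of_forall (hCg s))
  have hQρ_int : ∀ s (μ : Measure A) [IsFiniteMeasure μ], Integrable (Qρ s) μ := fun s _ _ =>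
    .of_bound (hQρ_meas s).aestronglyMeasurable Cρ (.of_forall (hCρ s))
  have hπρ_prob : ∀ s, IsProbabilityMeasure (πρ s) := fun s =>
    hπρ s ▸ ProbabilityTheory.cond_isProbabilityMeasure (ht_pos s).ne'
  have hcond : ∀ s, ∫ a, Qg s a ∂(πg s) ≤ ∫ a, Qg s a ∂(πρ s) := fun s =>
    hπρ s ▸ integral_le_integral_cond_superlevel (πg s) (hQg_meas s) (hQg_int s _) (t s) (ht_pos s)
  set W : S → ℝ := fun s => (∫ a, Qρ s a ∂(πρ s)) - ∫ a, Qg s a ∂(πg s)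
  have hbellman : ∀ s a, Qρ s a - Qg s a = γ * ∑ s', (P (s, a) s').toReal * W s' := by
    intro s a
    rw [hQρ s a, hQg s a]
    simp only [W, mul_sub, Finset.sum_sub_distrib]
    ring
  refine fun s => sub_nonneg.mp (nonneg_of_mul_le_self_at_min (W := W) hγ1 (fun s₀ hs₀ => ?_) s)
  calc γ * W s₀ = ∫ _, γ * W s₀ ∂(πρ s₀) := by simp
    _ ≤ ∫ a, (Qρ s₀ a - Qg s₀ a) ∂(πρ s₀) :=
        integral_mono (integrable_const _) ((hQρ_int s₀ _).sub (hQg_int s₀ _)) fun a =>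
          (hbellman s₀ a).symm ▸
            mul_le_mul_of_nonneg_left ((P (s₀, a)).le_sum_toReal_mul hs₀) hγ0
    _ = (∫ a, Qρ s₀ a ∂(πρ s₀)) - ∫ a, Qg s₀ a ∂(πρ s₀) :=
        integral_sub (hQρ_int s₀ _) (hQg_int s₀ _)
    _ ≤ W s₀ := by linarith [hcond s₀]

/-- Continuous-action case of Theorem 5.1: the percentile-greedy policy `πρ`,
obtained by conditioning each `πg s` on the set of actions whose action-value
`Qg s` lies above the threshold `t s`, is at least as good as `πg` at every
state. -/
theorem percentile_greedy_improvement_continuous {S A : Type*}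
    [Fintype S] [Nonempty S] [MeasurableSpace A]
    (r : S × A → ℝ) (hr_meas : ∀ s, Measurable fun a => r (s, a))
    (hr_bdd : ∃ C, ∀ s a, |r (s, a)| ≤ C)
    (P : S × A → PMF S)
    (hP_meas : ∀ s s', Measurable fun a => (P (s, a) s').toReal)
    (γ : ℝ) (hγ0 : 0 ≤ γ) (hγ1 : γ < 1)
    (πg : S → Measure A) (hπg : ∀ s, IsProbabilityMeasure (πg s))
    (Qg : S → A → ℝ)
    (hQg_meas : ∀ s, Measurable (Qg s))
    (hQg_bdd : ∃ C, ∀ s a, |Qg s a| ≤ C)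
    (hQg : ∀ s a, Qg s a =
      r (s, a) + γ * ∑ s', (P (s, a) s').toReal * ∫ a', Qg s' a' ∂(πg s'))
    (t : S → ℝ)
    (ht_pos : ∀ s, 0 < πg s {a | t s ≤ Qg s a})
    (πρ : S → Measure A)
    (hπρ : ∀ s, πρ s = ProbabilityTheory.cond (πg s) {a | t s ≤ Qg s a})
    (Qρ : S → A → ℝ)
    (hQρ_meas : ∀ s, Measurable (Qρ s))
    (hQρ_bdd : ∃ C, ∀ s a, |Qρ s a| ≤ C)
    (hQρ : ∀ s a, Qρ s a =
      r (s, a) + γ * ∑ s', (P (s, a) s').toReal * ∫ a', Qρ s' a' ∂(πρ s')) :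
    ∀ s, (∫ a, Qρ s a ∂(πρ s)) ≥ ∫ a, Qg s a ∂(πg s) :=
  percentile_greedy_improvement_continuous_general r P γ hγ0 hγ1 πg hπg Qg hQg_meas hQg_bdd hQg t
    ht_pos πρ hπρ Qρ hQρ_meas hQρ_bdd hQρ
end
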